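/- arXiv:2506.19661 — 3 statements merged into one kernel-verified Lean document; each statement's English description precedes it below -/
import Mathlib

section
/- Let (V₁, E₁) and (V₂, E₂) be hypergraphs and let ψ be a type-preserving graph isomorphism from the incidence lowering of (V₁, E₁) to the incidence lowering of (V₂, E₂). Then the induced bijection φ : V₁ ≃ V₂ obtained by restricting ψ to Sum.inl-vertices is a hypergraph isomorphism: for every S : Set V₁, S ∈ E₁ ↔ φ '' S ∈ E₂; moreover, for every e ∈ E₁, if ψ (Sum.inr e) = Sum.inr e' then e' = φ '' e. -/
/-- The incidence lowering of a hypergraph `(V, E)`: the simple graph on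
`V ⊕ {e // e ∈ E}` in which `Sum.inl v` is adjacent to `Sum.inr e` iff `v ∈ e`,
with no other adjacencies. -/
def incidenceLowering {V : Type*} (E : Set (Set V)) :
    SimpleGraph (V ⊕ {e // e ∈ E}) where
  Adj x y :=
    (∃ (v : V) (e : {e // e ∈ E}), x = Sum.inl v ∧ y = Sum.inr e ∧ v ∈ e.1) ∨
    (∃ (v : V) (e : {e // e ∈ E}), x = Sum.inr e ∧ y = Sum.inl v ∧ v ∈ e.1)
  symm := by
    refine ⟨?_⟩
    rintro x y (⟨v, e, rfl, rfl, h⟩ | ⟨v, e, rfl, rfl, h⟩)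
    · exact Or.inr ⟨v, e, rfl, rfl, h⟩
    · exact Or.inl ⟨v, e, rfl, rfl, h⟩
  loopless := by
    refine ⟨?_⟩
    rintro x (⟨v, e, rfl, h, -⟩ | ⟨v, e, rfl, h, -⟩) <;> simp at h

/-
Adjacency in a lowering only joins a vertex to a hyperedge containing it, so a type-preserving
isomorphism `ψ` that sends the hyperedge `e` to `e'` must satisfy `v ∈ e ↔ φ v ∈ e'`, i.e.
`e' = φ '' e`. Every hyperedge of `E₂` is hit by some hyperedge of `E₁` (as `ψ` sends
node-vertices to node-vertices, `ψ⁻¹` cannot send a hyperedge-vertex to one), which gives the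
converse direction of `S ∈ E₁ ↔ φ '' S ∈ E₂`.
-/

namespace Equiv

variable {α β γ δ : Type*}

theorem exists_inr_of_map_inl (ψ : α ⊕ β ≃ γ ⊕ δ) (hl : ∀ a, ∃ c, ψ (.inl a) = .inl c)
    (d : δ) : ∃ b, ψ (.inr b) = .inr d := by
  cases h : ψ.symm (.inr d) with
  | inl a =>
    obtain ⟨c, hc⟩ := hl a
    simp [← h] at hc
  | inr b => exact ⟨b, by rw [← h, apply_symm_apply]⟩

theorem exists_equiv_of_map_inl_of_map_inr (ψ : α ⊕ β ≃ γ ⊕ δ)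
    (hl : ∀ a, ∃ c, ψ (.inl a) = .inl c) (hr : ∀ b, ∃ d, ψ (.inr b) = .inr d) :
    ∃ φ : α ≃ γ, ∀ a, ψ (.inl a) = .inl (φ a) := by
  have hleft : ∀ x, x.isLeft ↔ (ψ x).isLeft := by
    rintro (a | b)
    · obtain ⟨c, hc⟩ := hl a
      simp [hc]
    · obtain ⟨d, hd⟩ := hr b
      simp [hd]
  refine ⟨sumIsLeft.symm.trans ((ψ.subtypeEquiv hleft).trans sumIsLeft), fun a => ?_⟩
  obtain ⟨c, hc⟩ := hl a
  simp [hc]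

end Equiv

theorem incidenceLowering_adj {V : Type*} (E : Set (Set V)) (v : V) (e : {e // e ∈ E}) :
    (incidenceLowering E).Adj (.inl v) (.inr e) ↔ v ∈ e.1 := by
  constructor
  · rintro (⟨v', e', hv, he, h⟩ | ⟨v', e', hv, -, -⟩)
    · cases hv; cases he; exact h
    · cases hv
  · exact fun h => .inl ⟨v, e, rfl, rfl, h⟩

theorem incidenceLowering.preimage_eq_of_embedding {V₁ V₂ : Type*} {E₁ : Set (Set V₁)}
    {E₂ : Set (Set V₂)} (ψ : incidenceLowering E₁ ↪g incidenceLowering E₂) {f : V₁ → V₂}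
    (hf : ∀ v, ψ (.inl v) = .inl (f v)) {e : {e // e ∈ E₁}} {e' : {e // e ∈ E₂}}
    (he : ψ (.inr e) = .inr e') : f ⁻¹' e'.1 = e.1 := by
  ext v
  rw [Set.mem_preimage, ← incidenceLowering_adj, ← incidenceLowering_adj, ← hf, ← he,
    ψ.map_adj_iff]

/-- A type-preserving graph isomorphism `ψ` of incidence
lowerings restricts on node-vertices to a hypergraph isomorphism `φ`;
moreover `ψ` maps the hyperedge-vertex `e` to the hyperedge-vertex `φ '' e`. -/
theorem lowering_iso_lifts {V₁ V₂ : Type*}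
    (E₁ : Set (Set V₁)) (E₂ : Set (Set V₂))
    (ψ : incidenceLowering E₁ ≃g incidenceLowering E₂)
    (hnode : ∀ v : V₁, ∃ w : V₂, ψ (Sum.inl v) = Sum.inl w)
    (hedge : ∀ e : {e // e ∈ E₁}, ∃ e' : {e // e ∈ E₂}, ψ (Sum.inr e) = Sum.inr e') :
    ∃ φ : V₁ ≃ V₂,
      (∀ v : V₁, ψ (Sum.inl v) = Sum.inl (φ v)) ∧
      (∀ S : Set V₁, S ∈ E₁ ↔ φ '' S ∈ E₂) ∧
      (∀ (e : {e // e ∈ E₁}) (e' : {e // e ∈ E₂}),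
        ψ (Sum.inr e) = Sum.inr e' → e'.1 = φ '' e.1) := by
  obtain ⟨φ, hφ⟩ := ψ.toEquiv.exists_equiv_of_map_inl_of_map_inr hnode hedge
  have hpreimage {e e'} (he : ψ (.inr e) = .inr e') : φ ⁻¹' e'.1 = e.1 :=
    incidenceLowering.preimage_eq_of_embedding ψ.toEmbedding hφ he
  have himage (e e') (he : ψ (.inr e) = .inr e') : e'.1 = φ '' e.1 := by
    rw [← hpreimage he, φ.image_preimage]
  refine ⟨φ, hφ, fun S => ⟨fun hS => ?_, fun hS => ?_⟩, himage⟩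
  · obtain ⟨e', he'⟩ := hedge ⟨S, hS⟩
    exact himage _ _ he' ▸ e'.2
  · obtain ⟨e, he⟩ := ψ.toEquiv.exists_inr_of_map_inl hnode ⟨_, hS⟩
    have hS' : e.1 = S := by rw [← hpreimage he, φ.preimage_image]
    exact hS' ▸ e.2
end

section
/- Two graphs with node-tuple collections (G₁, T₁) and (G₂, T₂) admit an isomorphism of graphs with node-tuple collections if and only if their lowerings admit a type-preserving isomorphism. That is, there exists a graph isomorphism φ : G₁ ≃g G₂ with (∀ t : List V₁, t ∈ T₁ ↔ t.map φ ∈ T₂) if and only if there exists a bijection ψ between the vertex types of the two lowerings that maps node-vertices to node-vertices, edge-vertices to edge-vertices, and tuple-vertices to tuple-vertices, and preserves in both directions the adjacency relation and the indexed membership relation. -/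
/-- Vertex type of the lowering of a graph with a node-tuple collection:
node-vertices, edge-vertices, and tuple-vertices. -/
abbrev NTVert {V : Type*} (G : SimpleGraph V) (T : Set (List V)) : Type _ :=
  V ⊕ {e // e ∈ G.edgeSet} ⊕ {t // t ∈ T}

/-- Adjacency relation of the lowering: a node-vertex `v` is related to an
edge-vertex `e` iff `v` is an endpoint of `e`. -/
def ntAdj {V : Type*} (G : SimpleGraph V) (T : Set (List V)) :
    NTVert G T → NTVert G T → Prop
  | Sum.inl v, Sum.inr (Sum.inl e) => v ∈ e.1
  | _, _ => False

/-- Indexed membership relation of the lowering: `ntMem _ _ x y i` holds iff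
`x` is a node-vertex `v`, `y` is a tuple-vertex `t`, and the `i`-th entry of
the list `t` is `v`. -/
def ntMem {V : Type*} (G : SimpleGraph V) (T : Set (List V)) :
    NTVert G T → NTVert G T → ℕ → Prop
  | Sum.inl v, Sum.inr (Sum.inr t), i => t.1[i]? = some v
  | _, _, _ => False

/-! A type-preserving isomorphism of the lowerings is the same thing as a triple of bijections
`f` on nodes, `g` on edges and `h` on tuples. Since an unordered pair is determined by its members
and a list by its entries at each index, preserving adjacency says exactly that `g e = e.map f`,
and preserving indexed membership that `h t = t.map f`. Bijections `g`, `h` of this form exist iff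
`e ↦ e.map f` and `t ↦ t.map f` carry the edges and tuples on one side exactly onto those on the
other, i.e. iff `f` is a graph isomorphism respecting the tuple collections. -/

open Function Sum

namespace Option

theorem eq_map_iff_forall_eq_some {α β : Type*} (f : α ≃ β) {o : Option α} {o' : Option β} :
    o' = o.map f ↔ ∀ a, o = some a ↔ o' = some (f a) := by
  have hmap : ∀ a, o.map f = some (f a) ↔ o = some a := fun a =>
    (Option.map_injective f.injective).eq_iff' rfl
  constructor
  · rintro rfl a
    exact (hmap a).symm
  · intro h
    refine Option.ext fun b => ?_
    obtain ⟨a, rfl⟩ := f.surjective b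
    rw [hmap, h]

end Option

namespace List

theorem eq_map_iff_forall_getElem?_eq_some {α β : Type*} (f : α ≃ β) {l : List α}
    {l' : List β} : l' = l.map f ↔ ∀ (i : ℕ) a, l[i]? = some a ↔ l'[i]? = some (f a) := by
  simp only [List.ext_getElem?_iff, List.getElem?_map, Option.eq_map_iff_forall_eq_some]

end List

namespace Sym2

theorem eq_map_iff_forall_mem {α β : Type*} (f : α ≃ β) {z : Sym2 α} {w : Sym2 β} :
    w = z.map f ↔ ∀ a, a ∈ z ↔ f a ∈ w := by
  have hmap : ∀ a, f a ∈ z.map f ↔ a ∈ z := fun a => by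
    simp [Sym2.mem_map, f.injective.eq_iff]
  constructor
  · rintro rfl a
    exact (hmap a).symm
  · intro h
    refine Sym2.ext fun b => ?_
    obtain ⟨a, rfl⟩ := f.surjective b
    rw [hmap, h]

end Sym2

namespace Equiv

def sym2Map {α β : Type*} (f : α ≃ β) : Sym2 α ≃ Sym2 β where
  toFun := Sym2.map f
  invFun := Sym2.map f.symm
  left_inv z := by simp [Sym2.map_map]
  right_inv z := by simp [Sym2.map_map]

theorem exists_subtype_equiv_val_eq_iff {α β : Type*} (e : α ≃ β) {p : α → Prop}
    {q : β → Prop} : (∃ g : {a // p a} ≃ {b // q b}, ∀ x, (g x : β) = e x) ↔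
      ∀ a, p a ↔ q (e a) := by
  constructor
  · rintro ⟨g, hg⟩ a
    refine ⟨fun ha => hg ⟨a, ha⟩ ▸ (g ⟨a, ha⟩).2, fun ha => ?_⟩
    obtain ⟨x, hx⟩ := g.surjective ⟨e a, ha⟩
    have : e x = e a := by rw [← hg, hx]
    exact e.injective this ▸ x.2
  · intro h
    exact ⟨e.subtypeEquiv h, fun _ => rfl⟩

theorem exists_eq_sumCongr {α β α' β' : Type*} (ψ : α ⊕ β ≃ α' ⊕ β')
    (hl : ∀ a, ∃ a', ψ (inl a) = inl a') (hr : ∀ b, ∃ b', ψ (inr b) = inr b') :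
    ∃ (f : α ≃ α') (g : β ≃ β'), ψ = f.sumCongr g := by
  choose f hf using hl
  choose g hg using hr
  have hf_surj : Surjective f := fun a' => by
    rcases h : ψ.symm (inl a') with a | b
    · exact ⟨a, inl_injective (by rw [← hf, ← h, apply_symm_apply])⟩
    · simpa [hg] using congrArg ψ h
  have hg_surj : Surjective g := fun b' => by
    rcases h : ψ.symm (inr b') with a | b
    · simpa [hf] using congrArg ψ h
    · exact ⟨b, inr_injective (by rw [← hg, ← h, apply_symm_apply])⟩
  have hf_inj : Injective f := fun a b h => inl_injective (ψ.injective (by rw [hf, hf, h]))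
  have hg_inj : Injective g := fun a b h => inr_injective (ψ.injective (by rw [hg, hg, h]))
  refine ⟨ofBijective f ⟨hf_inj, hf_surj⟩, ofBijective g ⟨hg_inj, hg_surj⟩, ?_⟩
  ext (a | b)
  exacts [hf a, hg b]

theorem exists_sumCongr_sumCongr_iff {α β γ α' β' γ' : Type*}
    {P : (α ⊕ β ⊕ γ ≃ α' ⊕ β' ⊕ γ') → Prop} :
    (∃ ψ : α ⊕ β ⊕ γ ≃ α' ⊕ β' ⊕ γ',
      (∀ a, ∃ a', ψ (inl a) = inl a') ∧ (∀ b, ∃ b', ψ (inr (inl b)) = inr (inl b')) ∧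
      (∀ c, ∃ c', ψ (inr (inr c)) = inr (inr c')) ∧ P ψ) ↔
    ∃ (f : α ≃ α') (g : β ≃ β') (h : γ ≃ γ'), P (f.sumCongr (g.sumCongr h)) := by
  constructor
  · rintro ⟨ψ, hα, hβ, hγ, hP⟩
    have hβγ : ∀ x, ∃ x', ψ (inr x) = inr x' := by
      rintro (b | c)
      · obtain ⟨b', hb⟩ := hβ b
        exact ⟨_, hb⟩
      · obtain ⟨c', hc⟩ := hγ c
        exact ⟨_, hc⟩
    obtain ⟨f, k, rfl⟩ := ψ.exists_eq_sumCongr hα hβγ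
    obtain ⟨g, h, rfl⟩ := k.exists_eq_sumCongr
      (fun b => (hβ b).imp fun _ h => inr_injective h)
      (fun c => (hγ c).imp fun _ h => inr_injective h)
    exact ⟨f, g, h, hP⟩
  · rintro ⟨f, g, h, hP⟩
    exact ⟨_, fun a => ⟨f a, rfl⟩, fun b => ⟨g b, rfl⟩, fun c => ⟨h c, rfl⟩, hP⟩

end Equiv

theorem SimpleGraph.exists_iso_iff {V W : Type*} {G : SimpleGraph V} {G' : SimpleGraph W}
    {P : (V ≃ W) → Prop} :
    (∃ φ : G ≃g G', P φ.toEquiv) ↔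
      ∃ f : V ≃ W, (∀ e, e ∈ G.edgeSet ↔ e.map f ∈ G'.edgeSet) ∧ P f := by
  constructor
  · rintro ⟨φ, hφ⟩
    exact ⟨φ.toEquiv, fun _ => φ.map_mem_edgeSet_iff.symm, hφ⟩
  · rintro ⟨f, hf, hP⟩
    exact ⟨⟨f, fun {a b} => (hf s(a, b)).symm⟩, hP⟩

section Lowering

variable {V₁ V₂ : Type*} {G₁ : SimpleGraph V₁} {G₂ : SimpleGraph V₂}
  {T₁ : Set (List V₁)} {T₂ : Set (List V₂)} (f : V₁ ≃ V₂)
  (g : {e // e ∈ G₁.edgeSet} ≃ {e // e ∈ G₂.edgeSet}) (h : {t // t ∈ T₁} ≃ {t // t ∈ T₂})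

theorem ntAdj_sumCongr_iff :
    (∀ x y, ntAdj G₁ T₁ x y ↔
      ntAdj G₂ T₂ (f.sumCongr (g.sumCongr h) x) (f.sumCongr (g.sumCongr h) y)) ↔
    ∀ e, (g e).1 = e.1.map f := by
  calc _ ↔ ∀ v e, v ∈ e.1 ↔ f v ∈ (g e).1 :=
        ⟨fun H v e => H (inl v) (inr (inl e)), by
          rintro H (v | e | t) (w | e' | t') <;> first | exact H v e' | exact Iff.rfl⟩
    _ ↔ _ := by
        simp only [Sym2.eq_map_iff_forall_mem]
        exact forall_comm

theorem ntMem_sumCongr_iff :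
    (∀ x y i, ntMem G₁ T₁ x y i ↔
      ntMem G₂ T₂ (f.sumCongr (g.sumCongr h) x) (f.sumCongr (g.sumCongr h) y) i) ↔
    ∀ t, (h t).1 = t.1.map f := by
  calc _ ↔ ∀ v t i, t.1[i]? = some v ↔ (h t).1[i]? = some (f v) :=
        ⟨fun H v t i => H (inl v) (inr (inr t)) i, by
          rintro H (v | e | t) (w | e' | t') i <;> first | exact H v t' i | exact Iff.rfl⟩
    _ ↔ _ := by
        simp only [List.eq_map_iff_forall_getElem?_eq_some]
        exact ⟨fun H t i v => H v t i, fun H v t i => H t i v⟩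

end Lowering

theorem nodeTuple_iso_iff_lowering_iso_general {V₁ V₂ : Type*}
    (G₁ : SimpleGraph V₁) (G₂ : SimpleGraph V₂)
    (T₁ : Set (List V₁)) (T₂ : Set (List V₂)) :
    (∃ φ : G₁ ≃g G₂, ∀ t : List V₁, t ∈ T₁ ↔ t.map ⇑φ ∈ T₂) ↔
    (∃ ψ : NTVert G₁ T₁ ≃ NTVert G₂ T₂,
      (∀ v : V₁, ∃ w : V₂, ψ (Sum.inl v) = Sum.inl w) ∧
      (∀ e : {e // e ∈ G₁.edgeSet}, ∃ e' : {e // e ∈ G₂.edgeSet},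
        ψ (Sum.inr (Sum.inl e)) = Sum.inr (Sum.inl e')) ∧
      (∀ t : {t // t ∈ T₁}, ∃ t' : {t // t ∈ T₂},
        ψ (Sum.inr (Sum.inr t)) = Sum.inr (Sum.inr t')) ∧
      (∀ x y, ntAdj G₁ T₁ x y ↔ ntAdj G₂ T₂ (ψ x) (ψ y)) ∧
      (∀ x y i, ntMem G₁ T₁ x y i ↔ ntMem G₂ T₂ (ψ x) (ψ y) i)) := by
  calc (∃ φ : G₁ ≃g G₂, ∀ t : List V₁, t ∈ T₁ ↔ t.map ⇑φ ∈ T₂)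
      ↔ ∃ f : V₁ ≃ V₂, (∀ e, e ∈ G₁.edgeSet ↔ e.map f ∈ G₂.edgeSet) ∧
          ∀ t, t ∈ T₁ ↔ t.map f ∈ T₂ :=
        SimpleGraph.exists_iso_iff (P := fun f => ∀ t, t ∈ T₁ ↔ t.map f ∈ T₂)
    _ ↔ ∃ (f : V₁ ≃ V₂) (g : {e // e ∈ G₁.edgeSet} ≃ {e // e ∈ G₂.edgeSet})
          (h : {t // t ∈ T₁} ≃ {t // t ∈ T₂}),
          (∀ e, (g e).1 = e.1.map f) ∧ ∀ t, (h t).1 = t.1.map f :=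
        exists_congr fun f => (and_congr
          (f.sym2Map.exists_subtype_equiv_val_eq_iff (p := (· ∈ G₁.edgeSet))).symm
          (f.listEquivOfEquiv.exists_subtype_equiv_val_eq_iff (p := (· ∈ T₁))).symm).trans
          exists_and_exists_comm
    _ ↔ _ :=
        (exists_congr fun f => exists_congr fun g => exists_congr fun h =>
          and_congr (ntAdj_sumCongr_iff f g h).symm (ntMem_sumCongr_iff f g h).symm).trans
          (Equiv.exists_sumCongr_sumCongr_iff (P := fun ψ =>
            (∀ x y, ntAdj G₁ T₁ x y ↔ ntAdj G₂ T₂ (ψ x) (ψ y)) ∧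
            ∀ x y i, ntMem G₁ T₁ x y i ↔ ntMem G₂ T₂ (ψ x) (ψ y) i)).symm

/-- Two graphs with node-tuple collections are isomorphic iff
their lowerings admit a type-preserving isomorphism. -/
theorem nodeTuple_iso_iff_lowering_iso {V₁ V₂ : Type*}
    (G₁ : SimpleGraph V₁) (G₂ : SimpleGraph V₂)
    (T₁ : Set (List V₁)) (T₂ : Set (List V₂))
    (hT₁ : ∀ t ∈ T₁, 2 ≤ t.length) (hT₂ : ∀ t ∈ T₂, 2 ≤ t.length) :
    (∃ φ : G₁ ≃g G₂, ∀ t : List V₁, t ∈ T₁ ↔ t.map ⇑φ ∈ T₂) ↔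
    (∃ ψ : NTVert G₁ T₁ ≃ NTVert G₂ T₂,
      (∀ v : V₁, ∃ w : V₂, ψ (Sum.inl v) = Sum.inl w) ∧
      (∀ e : {e // e ∈ G₁.edgeSet}, ∃ e' : {e // e ∈ G₂.edgeSet},
        ψ (Sum.inr (Sum.inl e)) = Sum.inr (Sum.inl e')) ∧
      (∀ t : {t // t ∈ T₁}, ∃ t' : {t // t ∈ T₂},
        ψ (Sum.inr (Sum.inr t)) = Sum.inr (Sum.inr t')) ∧
      (∀ x y, ntAdj G₁ T₁ x y ↔ ntAdj G₂ T₂ (ψ x) (ψ y)) ∧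
      (∀ x y i, ntMem G₁ T₁ x y i ↔ ntMem G₂ T₂ (ψ x) (ψ y) i)) :=
  nodeTuple_iso_iff_lowering_iso_general G₁ G₂ T₁ T₂
end

section
/- Let (G₁, T₁) and (G₂, T₂) be graphs with node-tuple collections and let ψ be a type-preserving isomorphism from the lowering of (G₁, T₁) to the lowering of (G₂, T₂). Then the bijection φ : V₁ ≃ V₂ obtained by restricting ψ to node-vertices is an isomorphism of graphs with node-tuple collections: φ is a graph isomorphism from G₁ to G₂, and for every list t over V₁, t ∈ T₁ if and only if t.map φ ∈ T₂. -/
/-! Type preservation splits `ψ` into bijections `φ`, `ε`, `τ` on node-, edge- and tuple-vertices.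
The adjacency relation forces the edge `ε e` to have the endpoints of `e` moved by `φ`, i.e.
`ε e = e.map φ`, and the indexed membership relation forces `τ t = t.map φ`. So `φ` maps the
edge set of `G₁` onto that of `G₂` and `T₁` onto `T₂`. -/

theorem Equiv.exists_eq_sumCongr_s8 {α β γ δ : Type*} (e : α ⊕ β ≃ γ ⊕ δ)
    (hl : ∀ a, ∃ c, e (.inl a) = .inl c) (hr : ∀ b, ∃ d, e (.inr b) = .inr d) :
    ∃ (f : α ≃ γ) (g : β ≃ δ), e = f.sumCongr g := by
  choose f hf using hl
  choose g hg using hr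
  have he : ⇑e = Sum.map f g := funext (Sum.rec hf hg)
  obtain ⟨hf', hg'⟩ := Sum.map_bijective.mp (he ▸ e.bijective)
  exact ⟨.ofBijective f hf', .ofBijective g hg', Equiv.coe_inj.mp he⟩

theorem Set.image_eq_of_equiv {α β : Type*} {s : Set α} {t : Set β} (f : α → β) (e : s ≃ t)
    (he : ∀ x, (e x : β) = f x) : f '' s = t := by
  ext b
  constructor
  · rintro ⟨a, ha, rfl⟩
    exact he ⟨a, ha⟩ ▸ (e ⟨a, ha⟩).2
  · intro hb
    exact ⟨e.symm ⟨b, hb⟩, (e.symm ⟨b, hb⟩).2, by rw [← he, Equiv.apply_symm_apply]⟩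

theorem Sym2.eq_map_of_mem_iff {α β : Type*} (f : α ≃ β) {z : Sym2 α} {z' : Sym2 β}
    (h : ∀ a, a ∈ z ↔ f a ∈ z') : z' = z.map f := by
  ext b
  obtain ⟨a, rfl⟩ := f.surjective b
  rw [← h, Sym2.mem_map]
  exact ⟨fun ha => ⟨a, ha, rfl⟩, fun ⟨a', ha', hfa⟩ => f.injective hfa ▸ ha'⟩

theorem List.eq_map_of_getElem?_eq_some_iff {α β : Type*} (f : α ≃ β) {l : List α}
    {l' : List β} (h : ∀ a (i : ℕ), l[i]? = some a ↔ l'[i]? = some (f a)) : l' = l.map f := by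
  refine List.ext_getElem? fun i => Option.ext fun b => ?_
  obtain ⟨a, rfl⟩ := f.surjective b
  rw [← h, List.getElem?_map, Option.map_eq_some_iff]
  exact ⟨fun ha => ⟨a, ha, rfl⟩, fun ⟨a', ha', hfa⟩ => f.injective hfa ▸ ha'⟩

theorem nodeTuple_lowering_iso_lifts_general {V₁ V₂ : Type*}
    (G₁ : SimpleGraph V₁) (G₂ : SimpleGraph V₂)
    (T₁ : Set (List V₁)) (T₂ : Set (List V₂))
    (ψ : NTVert G₁ T₁ ≃ NTVert G₂ T₂)
    (hnode : ∀ v : V₁, ∃ w : V₂, ψ (Sum.inl v) = Sum.inl w)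
    (hedge : ∀ e : {e // e ∈ G₁.edgeSet}, ∃ e' : {e // e ∈ G₂.edgeSet},
      ψ (Sum.inr (Sum.inl e)) = Sum.inr (Sum.inl e'))
    (htuple : ∀ t : {t // t ∈ T₁}, ∃ t' : {t // t ∈ T₂},
      ψ (Sum.inr (Sum.inr t)) = Sum.inr (Sum.inr t'))
    (hadj : ∀ x y, ntAdj G₁ T₁ x y ↔ ntAdj G₂ T₂ (ψ x) (ψ y))
    (hmem : ∀ x y i, ntMem G₁ T₁ x y i ↔ ntMem G₂ T₂ (ψ x) (ψ y) i) :
    ∃ φ : G₁ ≃g G₂,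
      (∀ v : V₁, ψ (Sum.inl v) = Sum.inl (φ v)) ∧
      (∀ t : List V₁, t ∈ T₁ ↔ t.map ⇑φ ∈ T₂) := by
  obtain ⟨φ, χ, rfl⟩ := ψ.exists_eq_sumCongr_s8 hnode <| by
    rintro (e | t)
    exacts [(hedge e).imp' Sum.inl fun _ => id, (htuple t).imp' Sum.inr fun _ => id]
  simp only [Equiv.sumCongr_apply, Sum.map_inr, Sum.inr.injEq] at hedge htuple
  obtain ⟨ε, τ, rfl⟩ := χ.exists_eq_sumCongr_s8 hedge htuple
  have hE : Sym2.map φ '' G₁.edgeSet = G₂.edgeSet := Set.image_eq_of_equiv _ ε fun e =>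
    Sym2.eq_map_of_mem_iff φ fun v => hadj (.inl v) (.inr (.inl e))
  have hT : List.map φ '' T₁ = T₂ := Set.image_eq_of_equiv _ τ fun t =>
    List.eq_map_of_getElem?_eq_some_iff φ fun v i => hmem (.inl v) (.inr (.inr t)) i
  obtain rfl : G₂ = G₁.map φ :=
    SimpleGraph.edgeSet_injective ((SimpleGraph.edgeSet_map φ.toEmbedding G₁).trans hE).symm
  subst hT
  exact ⟨.map φ G₁, fun _ => rfl, fun t =>
    (List.map_injective_iff.mpr φ.injective).mem_set_image.symm⟩

/-- A type-preserving isomorphism of the lowerings of two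
graphs with node-tuple collections restricts on node-vertices to an
isomorphism of graphs with node-tuple collections. -/
theorem nodeTuple_lowering_iso_lifts {V₁ V₂ : Type*}
    (G₁ : SimpleGraph V₁) (G₂ : SimpleGraph V₂)
    (T₁ : Set (List V₁)) (T₂ : Set (List V₂))
    (hT₁ : ∀ t ∈ T₁, 2 ≤ t.length) (hT₂ : ∀ t ∈ T₂, 2 ≤ t.length)
    (ψ : NTVert G₁ T₁ ≃ NTVert G₂ T₂)
    (hnode : ∀ v : V₁, ∃ w : V₂, ψ (Sum.inl v) = Sum.inl w)
    (hedge : ∀ e : {e // e ∈ G₁.edgeSet}, ∃ e' : {e // e ∈ G₂.edgeSet},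
      ψ (Sum.inr (Sum.inl e)) = Sum.inr (Sum.inl e'))
    (htuple : ∀ t : {t // t ∈ T₁}, ∃ t' : {t // t ∈ T₂},
      ψ (Sum.inr (Sum.inr t)) = Sum.inr (Sum.inr t'))
    (hadj : ∀ x y, ntAdj G₁ T₁ x y ↔ ntAdj G₂ T₂ (ψ x) (ψ y))
    (hmem : ∀ x y i, ntMem G₁ T₁ x y i ↔ ntMem G₂ T₂ (ψ x) (ψ y) i) :
    ∃ φ : G₁ ≃g G₂,
      (∀ v : V₁, ψ (Sum.inl v) = Sum.inl (φ v)) ∧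
      (∀ t : List V₁, t ∈ T₁ ↔ t.map ⇑φ ∈ T₂) :=
  nodeTuple_lowering_iso_lifts_general G₁ G₂ T₁ T₂ ψ hnode hedge htuple hadj hmem
end
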